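/- arXiv:1401.2681 — 5 statements merged into one kernel-verified Lean document; each statement's English description precedes it below -/
import Mathlib

section
/- Let M be a 2-level poset whose comparability graph is connected, locally 1-arc-transitive and locally 2-arc-transitive, with X = Min(M) and Y = Max(M). Then for all x, x' ∈ X and y, y' ∈ Y with x < y and x' < y', the intervals [x,y]^{M^D} and [x',y']^{M^D} in the Dedekind–MacNeille completion M^D of M are order-isomorphic. -/
set_option autoImplicit false

section Preamble

/-- A *cut* of a poset `M`: a nonempty subset, bounded above, which equals the set of
lower bounds of its set of upper bounds. -/
def IsCut {M : Type*} [PartialOrder M] (J : Set M) : Prop :=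
  J.Nonempty ∧ (upperBounds J).Nonempty ∧ lowerBounds (upperBounds J) = J

/-- The Dedekind–MacNeille completion of `M`: the set of cuts, ordered by inclusion. -/
abbrev DMC (M : Type*) [PartialOrder M] : Type _ := {J : Set M // IsCut J}

/-- The canonical embedding of `M` into `DMC M`, `a ↦ {x | x ≤ a}`. -/
def principalCut {M : Type*} [PartialOrder M] (a : M) : DMC M :=
  ⟨Set.Iic a, ⟨a, le_refl a⟩, ⟨a, fun _ hx => hx⟩, by
    apply Set.Subset.antisymm
    · intro x hx
      exact hx (fun _ hy => hy)
    · exact subset_lowerBounds_upperBounds _⟩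

/-- The image of `M` in its Dedekind–MacNeille completion (the principal cuts). -/
def principalSet (M : Type*) [PartialOrder M] : Set (DMC M) :=
  Set.range (fun a : M => principalCut a)

/-- A 2-level poset: every element is minimal or maximal. -/
def IsTwoLevel (M : Type*) [PartialOrder M] : Prop :=
  ∀ x : M, IsMin x ∨ IsMax x

/-- The set `Min(M)` of minimal elements. -/
def minSet (M : Type*) [PartialOrder M] : Set M := {x | IsMin x}

/-- The set `Max(M)` of maximal elements. -/
def maxSet (M : Type*) [PartialOrder M] : Set M := {x | IsMax x}

/-- The comparability graph of a poset: `x` adjacent to `y` iff `x < y` or `y < x`. -/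
def compGraph (M : Type*) [PartialOrder M] : SimpleGraph M where
  Adj x y := x < y ∨ y < x
  symm := ⟨fun _ _ h => Or.symm h⟩
  loopless := ⟨fun x h => by rcases h with h | h <;> exact lt_irrefl x h⟩

/-- Upward ramification points of `M`: infima in `DMC M` of two incomparable elements of `M`. -/
def upRam (M : Type*) [PartialOrder M] : Set (DMC M) :=
  {p | ∃ a b : M, ¬ a ≤ b ∧ ¬ b ≤ a ∧ IsGLB {principalCut a, principalCut b} p}

/-- Downward ramification points of `M`: suprema in `DMC M` of two incomparable elements of `M`. -/
def downRam (M : Type*) [PartialOrder M] : Set (DMC M) :=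
  {p | ∃ a b : M, ¬ a ≤ b ∧ ¬ b ≤ a ∧ IsLUB {principalCut a, principalCut b} p}

/-- `M⁺ = M ∪ Ram(M)`, as a subset of `DMC M`. -/
def MPlus (M : Type*) [PartialOrder M] : Set (DMC M) :=
  principalSet M ∪ upRam M ∪ downRam M

/-- A 2-arc in a graph. -/
def IsTwoArc {V : Type*} (G : SimpleGraph V) (v₀ v₁ v₂ : V) : Prop :=
  G.Adj v₀ v₁ ∧ G.Adj v₁ v₂ ∧ v₀ ≠ v₂

/-- Local 1-arc-transitivity: every vertex stabilizer is transitive on neighbours. -/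
def LocallyOneArcTransitive {V : Type*} (G : SimpleGraph V) : Prop :=
  ∀ v u w : V, G.Adj v u → G.Adj v w → ∃ g : G ≃g G, g v = v ∧ g u = w

/-- Local 2-arc-transitivity: every vertex stabilizer is transitive on 2-arcs from that vertex. -/
def LocallyTwoArcTransitive {V : Type*} (G : SimpleGraph V) : Prop :=
  ∀ v u₁ w₁ u₂ w₂ : V, IsTwoArc G v u₁ w₁ → IsTwoArc G v u₂ w₂ →
    ∃ g : G ≃g G, g v = v ∧ g u₁ = u₂ ∧ g w₁ = w₂

/-- (Global) 1-arc-transitivity of a graph. -/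
def OneArcTransitive {V : Type*} (G : SimpleGraph V) : Prop :=
  ∀ v₀ v₁ u₀ u₁ : V, G.Adj v₀ v₁ → G.Adj u₀ u₁ →
    ∃ g : G ≃g G, g v₀ = u₀ ∧ g v₁ = u₁

/-- (Global) 2-arc-transitivity of a graph. -/
def TwoArcTransitive {V : Type*} (G : SimpleGraph V) : Prop :=
  ∀ v₀ v₁ v₂ u₀ u₁ u₂ : V, IsTwoArc G v₀ v₁ v₂ → IsTwoArc G u₀ u₁ u₂ →
    ∃ g : G ≃g G, g v₀ = u₀ ∧ g v₁ = u₁ ∧ g v₂ = u₂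

/-- 3-CS-homogeneity: every isomorphism between connected 3-element induced subposets
extends to an automorphism. -/
def ThreeCSHomogeneous (M : Type*) [PartialOrder M] : Prop :=
  ∀ A B : Set M, A.ncard = 3 → B.ncard = 3 →
    ((compGraph M).induce A).Connected → ((compGraph M).induce B).Connected →
    ∀ f : ↥A ≃o ↥B, ∃ g : M ≃o M, ∀ a : ↥A, g ↑a = ↑(f a)

/-- 2-CS-transitivity: the automorphism group is transitive on comparable pairs. -/
def TwoCSTransitive (M : Type*) [PartialOrder M] : Prop :=
  ∀ a b a' b' : M, a < b → a' < b' → ∃ g : M ≃o M, g a = a' ∧ g b = b'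

/-- 3-CS-transitivity: for any two isomorphic connected 3-element induced subposets there
is an automorphism carrying one onto the other. -/
def ThreeCSTransitive (M : Type*) [PartialOrder M] : Prop :=
  ∀ A B : Set M, A.ncard = 3 → B.ncard = 3 →
    ((compGraph M).induce A).Connected → ((compGraph M).induce B).Connected →
    Nonempty (↥A ≃o ↥B) → ∃ g : M ≃o M, ⇑g '' A = B

/-- A subset of a poset is a `k`-diamond if it consists of a least element, a greatest
element, and exactly `k` pairwise incomparable elements strictly in between. -/
def IsKDiamond {P : Type*} [PartialOrder P] (s : Set P) (k : ℕ) : Prop :=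
  ∃ a b : P, a ∈ s ∧ b ∈ s ∧ a ≠ b ∧ (∀ z ∈ s, a ≤ z ∧ z ≤ b) ∧
    (s \ {a, b}).ncard = k ∧
    ∀ z ∈ s \ ({a, b} : Set P), ∀ w ∈ s \ ({a, b} : Set P), z ≠ w → ¬ z ≤ w

end Preamble

/-! A fixed vertex pins down the two sides of a connected bipartite graph, so the stabilizers
of local 1-arc-transitivity generate side-preserving automorphisms, which move any edge
`x < y` onto any other edge `x' < y'`. In a 2-level poset a side-preserving automorphism of
the comparability graph is an order automorphism, and order automorphisms of `M` extend to
its Dedekind–MacNeille completion, carrying `[x, y]` onto `[x', y']`. -/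

namespace SimpleGraph

variable {V : Type*} {G : SimpleGraph V}

def IsColorPreserving {α : Type*} (c : G.Coloring α) (f : G ≃g G) : Prop :=
  ∀ v, c (f v) = c v

theorem IsColorPreserving.trans {α : Type*} {c : G.Coloring α} {f g : G ≃g G}
    (hf : IsColorPreserving c f) (hg : IsColorPreserving c g) :
    IsColorPreserving c (f.trans g) :=
  fun v => (hg (f v)).trans (hf v)

theorem isColorPreserving_of_apply_eq (hconn : G.Preconnected) (c : G.Coloring Bool)
    (f : G ≃g G) {a : V} (ha : c (f a) = c a) : IsColorPreserving c f := by
  intro v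
  obtain ⟨p⟩ := hconn a v
  -- `p` and its image under `f` have the same length, hence the same colour parity.
  have hp := c.even_length_iff_congr p
  have hfp := c.even_length_iff_congr (p.map f.toHom)
  rw [Walk.length_map, hp] at hfp
  change _ ↔ (c (f a) = true ↔ c (f v) = true) at hfp
  rw [ha] at hfp
  revert hfp
  cases c a <;> cases c v <;> cases c (f v) <;> decide

variable (hconn : G.Preconnected) (h1arc : LocallyOneArcTransitive G) (c : G.Coloring Bool)
include hconn h1arc

theorem exists_isColorPreserving_stabilizer {v u w : V} (hu : G.Adj v u) (hw : G.Adj v w) :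
    ∃ g : G ≃g G, IsColorPreserving c g ∧ g v = v ∧ g u = w := by
  obtain ⟨g, hgv, hgu⟩ := h1arc v u w hu hw
  exact ⟨g, isColorPreserving_of_apply_eq hconn c g (by rw [hgv]), hgv, hgu⟩

theorem exists_isColorPreserving_apply_eq_or_adj {a b : V} (p : G.Walk a b) :
    ∃ g : G ≃g G, IsColorPreserving c g ∧ (g a = b ∨ G.Adj (g a) b) := by
  induction p with
  | nil => exact ⟨RelIso.refl _, fun _ => rfl, Or.inl rfl⟩
  | @cons a a₁ b hadj _ ih =>
    obtain ⟨g, hg, hgb | hgd⟩ := ih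
    · exact ⟨g, hg, Or.inr (hgb ▸ g.map_adj_iff.mpr hadj)⟩
    · obtain ⟨k, hk, -, hka⟩ := exists_isColorPreserving_stabilizer hconn h1arc c
        (g.map_adj_iff.mpr hadj).symm hgd
      exact ⟨g.trans k, hg.trans hk, Or.inl hka⟩

theorem exists_isColorPreserving_apply_eq {a b : V} (hab : c a = c b) :
    ∃ g : G ≃g G, IsColorPreserving c g ∧ g a = b := by
  obtain ⟨p⟩ := hconn a b
  obtain ⟨g, hg, hgb | hadj⟩ := exists_isColorPreserving_apply_eq_or_adj hconn h1arc c p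
  · exact ⟨g, hg, hgb⟩
  · exact absurd (by rw [hg, hab]) (c.valid hadj)

theorem exists_isColorPreserving_arc {a b a' b' : V} (hab : G.Adj a b) (hab' : G.Adj a' b')
    (haa' : c a = c a') :
    ∃ g : G ≃g G, IsColorPreserving c g ∧ g a = a' ∧ g b = b' := by
  obtain ⟨g, hg, hga⟩ := exists_isColorPreserving_apply_eq hconn h1arc c haa'
  obtain ⟨k, hk, hka, hkb⟩ := exists_isColorPreserving_stabilizer hconn h1arc c
    (hga ▸ g.map_adj_iff.mpr hab) hab'
  exact ⟨g.trans k, hg.trans hk, by simp [hga, hka], hkb⟩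

end SimpleGraph

open SimpleGraph

section TwoLevel

variable {M : Type*} [PartialOrder M]

theorem compGraph_adj_iff_lt_of_isMin {a b : M} (ha : IsMin a) :
    (compGraph M).Adj a b ↔ a < b :=
  ⟨fun h => h.resolve_right fun hba => not_isMin_of_lt hba ha, Or.inl⟩

theorem IsTwoLevel.isMin_of_lt (h : IsTwoLevel M) {a b : M} (hab : a < b) : IsMin a :=
  (h a).resolve_right fun ha => ha.not_lt hab

theorem IsTwoLevel.lt_iff (h : IsTwoLevel M) {a b : M} :
    a < b ↔ IsMin a ∧ (compGraph M).Adj a b :=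
  ⟨fun hab => ⟨h.isMin_of_lt hab, Or.inl hab⟩,
    fun ⟨ha, hab⟩ => (compGraph_adj_iff_lt_of_isMin ha).mp hab⟩

open scoped Classical in
noncomputable def IsTwoLevel.minColoring (h : IsTwoLevel M) : (compGraph M).Coloring Bool :=
  Coloring.mk (fun v => decide (IsMin v)) fun {u v} huv => by
    rcases huv with huv | huv <;> simp [h.isMin_of_lt huv, not_isMin_of_lt huv]

theorem IsTwoLevel.minColoring_eq_true_iff (h : IsTwoLevel M) (v : M) :
    h.minColoring v = true ↔ IsMin v := by
  classical exact decide_eq_true_iff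

theorem IsTwoLevel.isMin_apply_iff (h : IsTwoLevel M) {f : compGraph M ≃g compGraph M}
    (hf : IsColorPreserving h.minColoring f) (v : M) : IsMin (f v) ↔ IsMin v := by
  rw [← h.minColoring_eq_true_iff, ← h.minColoring_eq_true_iff, hf v]

noncomputable def IsTwoLevel.orderIsoOfGraphIso (h : IsTwoLevel M)
    (f : compGraph M ≃g compGraph M) (hf : IsColorPreserving h.minColoring f) : M ≃o M :=
  OrderIso.ofRelIsoLT
    { toEquiv := f.toEquiv
      map_rel_iff' := by
        intro a b
        simp only [h.lt_iff]
        exact and_congr (h.isMin_apply_iff hf a) f.map_adj_iff }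

end TwoLevel

section Completion

variable {M N : Type*} [PartialOrder M] [PartialOrder N]

theorem IsCut.image (e : M ≃o N) {J : Set M} (h : IsCut J) : IsCut (e '' J) := by
  obtain ⟨hne, hub, hcut⟩ := h
  refine ⟨hne.image e, ?_, ?_⟩
  · rw [e.upperBounds_image]
    exact hub.image e
  · rw [e.upperBounds_image, e.lowerBounds_image, hcut]

def DMC.congr (e : M ≃o N) : DMC M ≃o DMC N where
  toFun J := ⟨e '' J.1, J.2.image e⟩
  invFun J := ⟨e.symm '' J.1, J.2.image e.symm⟩
  left_inv J := Subtype.ext (e.toEquiv.symm_image_image J.1)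
  right_inv J := Subtype.ext (e.toEquiv.image_symm_image J.1)
  map_rel_iff' := Set.image_subset_image_iff e.injective

theorem DMC.congr_principalCut (e : M ≃o N) (a : M) :
    DMC.congr e (principalCut a) = principalCut (e a) :=
  Subtype.ext (e.image_Iic a)

end Completion

def OrderIso.restrictIcc {α β : Type*} [Preorder α] [Preorder β] (e : α ≃o β) (a b : α) :
    Set.Icc a b ≃o Set.Icc (e a) (e b) where
  toFun z := ⟨e z, e.monotone z.2.1, e.monotone z.2.2⟩
  invFun z := ⟨e.symm z, e.le_symm_apply.mpr z.2.1, e.symm_apply_le.mpr z.2.2⟩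
  left_inv z := Subtype.ext (e.symm_apply_apply z)
  right_inv z := Subtype.ext (e.apply_symm_apply z)
  map_rel_iff' := e.le_iff_le

theorem intervals_iso_of_locally_arc_transitive_general (M : Type*) [PartialOrder M]
    (h2lev : IsTwoLevel M)
    (hconn : (compGraph M).Connected)
    (h1arc : LocallyOneArcTransitive (compGraph M)) :
    ∀ x x' y y' : M, x ∈ minSet M → x' ∈ minSet M → y ∈ maxSet M → y' ∈ maxSet M →
      x < y → x' < y' →
      Nonempty (↥(Set.Icc (principalCut x) (principalCut y)) ≃o
        ↥(Set.Icc (principalCut x') (principalCut y'))) := by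
  intro x x' y y' hx hx' _ _ hxy hx'y'
  have hsides : h2lev.minColoring x = h2lev.minColoring x' := by
    rw [Bool.eq_iff_iff, h2lev.minColoring_eq_true_iff, h2lev.minColoring_eq_true_iff]
    exact iff_of_true hx hx'
  obtain ⟨g, hg, hgx, hgy⟩ :=
    exists_isColorPreserving_arc hconn.preconnected h1arc _ (Or.inl hxy) (Or.inl hx'y') hsides
  let e := DMC.congr (h2lev.orderIsoOfGraphIso g hg)
  have hex : e (principalCut x) = principalCut x' :=
    (DMC.congr_principalCut _ x).trans (congrArg principalCut hgx)
  have hey : e (principalCut y) = principalCut y' :=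
    (DMC.congr_principalCut _ y).trans (congrArg principalCut hgy)
  exact hex ▸ hey ▸ ⟨e.restrictIcc (principalCut x) (principalCut y)⟩

/-- In a connected, locally 1- and 2-arc-transitive 2-level poset, all
intervals `[x,y]` (for `x ∈ Min(M)`, `y ∈ Max(M)`, `x < y`) of the Dedekind–MacNeille
completion are order-isomorphic. -/
theorem intervals_iso_of_locally_arc_transitive (M : Type*) [PartialOrder M]
    (h2lev : IsTwoLevel M)
    (hconn : (compGraph M).Connected)
    (h1arc : LocallyOneArcTransitive (compGraph M))
    (h2arc : LocallyTwoArcTransitive (compGraph M)) :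
    ∀ x x' y y' : M, x ∈ minSet M → x' ∈ minSet M → y ∈ maxSet M → y' ∈ maxSet M →
      x < y → x' < y' →
      Nonempty (↥(Set.Icc (principalCut x) (principalCut y)) ≃o
        ↥(Set.Icc (principalCut x') (principalCut y'))) :=
  intervals_iso_of_locally_arc_transitive_general M h2lev hconn h1arc
end

section
/- Let M be a poset such that for all a, b ∈ M with a ≤ b the interval [a,b]^{M^+} = {z ∈ M^+ : a ≤ z ≤ b} is a chain. Then for all a, b ∈ M^D with a ≤ b, the interval [a,b]^{M^D} is a chain. -/
set_option autoImplicit false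

/-!
Suppose `x, y ∈ [A, B]` are incomparable cuts. Pick `u ∈ x \ y`, `v ∈ y \ x`, some `n ∈ A` and an
upper bound `m ∈ M` of `B`. The suprema `p = n ∨ u` and `q = n ∨ v` in `M^D` lie in `M⁺`
(each is either a principal cut or a downward ramification point) and in `[n, m]`, with
`u ≤ p ≤ x` and `v ≤ q ≤ y`. Hence `p ≤ q` would put `u` in `y`, and `q ≤ p` would put `v` in
`x`, so `p` and `q` are incomparable in `[n, m]^{M⁺}`.
-/

section DedekindMacNeille

variable {M : Type*} [PartialOrder M]

theorem isLowerSet_cut (x : DMC M) : IsLowerSet x.1 := by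
  intro a b hba ha
  rw [← x.2.2.2] at ha ⊢
  exact fun c hc => hba.trans (ha hc)

theorem principalCut_le_iff {x : DMC M} {a : M} : principalCut a ≤ x ↔ a ∈ x.1 :=
  ⟨fun h => h (Set.mem_Iic.mpr le_rfl), fun h _ hb => isLowerSet_cut x hb h⟩

theorem principalCut_le_principalCut {a b : M} : principalCut a ≤ principalCut b ↔ a ≤ b :=
  principalCut_le_iff

theorem isCut_lowerBounds_upperBounds {S : Set M} (hS : S.Nonempty) (hbdd : BddAbove S) :
    IsCut (lowerBounds (upperBounds S)) := by
  have hub : upperBounds (lowerBounds (upperBounds S)) = upperBounds S :=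
    gc_upperBounds_lowerBounds.l_u_l_eq_l S
  exact ⟨hS.mono (subset_lowerBounds_upperBounds S), by rw [hub]; exact hbdd, by rw [hub]⟩

def cutOf (S : Set M) (hS : S.Nonempty) (hbdd : BddAbove S) : DMC M :=
  ⟨lowerBounds (upperBounds S), isCut_lowerBounds_upperBounds hS hbdd⟩

theorem isLUB_image_principalCut {S : Set M} (hS : S.Nonempty) (hbdd : BddAbove S) :
    IsLUB (principalCut '' S) (cutOf S hS hbdd) := by
  refine ⟨?_, fun z hz => ?_⟩
  · rintro _ ⟨a, ha, rfl⟩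
    exact principalCut_le_iff.mpr (subset_lowerBounds_upperBounds S ha)
  · have hSz : S ⊆ z.1 := fun a ha => principalCut_le_iff.mp (hz ⟨a, ha, rfl⟩)
    change lowerBounds (upperBounds S) ⊆ z.1
    rw [← z.2.2.2]
    exact lowerBounds_mono_set (upperBounds_mono_set hSz)

theorem exists_isLUB_principalCut_pair {a b m : M} (ha : a ≤ m) (hb : b ≤ m) :
    ∃ p : DMC M, IsLUB {principalCut a, principalCut b} p := by
  have hbdd : BddAbove ({a, b} : Set M) := ⟨m, by simp [upperBounds_insert, ha, hb]⟩
  refine ⟨cutOf {a, b} (Set.insert_nonempty a {b}) hbdd, ?_⟩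
  simpa only [Set.image_pair] using isLUB_image_principalCut (Set.insert_nonempty a {b}) hbdd

theorem isLUB_principalCut_pair_mem_MPlus {a b : M} {p : DMC M}
    (hp : IsLUB {principalCut a, principalCut b} p) : p ∈ MPlus M := by
  by_cases hab : a ≤ b
  · have hb : IsGreatest {principalCut a, principalCut b} (principalCut b) :=
      ⟨by simp, by simp [upperBounds_insert, principalCut_le_principalCut.mpr hab]⟩
    exact Or.inl (Or.inl ⟨b, hp.unique hb.isLUB |>.symm⟩)
  by_cases hba : b ≤ a
  · have ha : IsGreatest {principalCut a, principalCut b} (principalCut a) :=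
      ⟨by simp, by simp [upperBounds_insert, principalCut_le_principalCut.mpr hba]⟩
    exact Or.inl (Or.inl ⟨a, hp.unique ha.isLUB |>.symm⟩)
  exact Or.inr ⟨a, b, hab, hba, hp⟩

theorem exists_mem_MPlus_principalCut_le_le {A B x : DMC M} (hx : x ∈ Set.Icc A B)
    {n m u : M} (hn : n ∈ A.1) (hm : m ∈ upperBounds B.1) (hu : u ∈ x.1) :
    ∃ p ∈ MPlus M ∩ Set.Icc (principalCut n) (principalCut m), principalCut u ≤ p ∧ p ≤ x := by
  have hnx : n ∈ x.1 := hx.1 hn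
  obtain ⟨p, hp⟩ := exists_isLUB_principalCut_pair (hm (hx.2 hnx)) (hm (hx.2 hu))
  have hle_iff : ∀ z, p ≤ z ↔ principalCut n ≤ z ∧ principalCut u ≤ z := fun z => by
    simp [isLUB_le_iff hp, upperBounds_insert]
  refine ⟨p, ⟨isLUB_principalCut_pair_mem_MPlus hp, hp.1 (by simp), ?_⟩, hp.1 (by simp), ?_⟩
  · simp only [hle_iff, principalCut_le_iff]
    exact ⟨hm (hx.2 hnx), hm (hx.2 hu)⟩
  · simp only [hle_iff, principalCut_le_iff]
    exact ⟨hnx, hu⟩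

end DedekindMacNeille

/-- If all intervals of `M⁺` over pairs of elements of `M` are chains, then
all intervals of the Dedekind–MacNeille completion `M^D` are chains. -/
theorem intervals_of_completion_chains (M : Type*) [PartialOrder M]
    (h : ∀ a b : M, a ≤ b →
      IsChain (· ≤ ·) (MPlus M ∩ Set.Icc (principalCut a) (principalCut b))) :
    ∀ a b : DMC M, a ≤ b → IsChain (· ≤ ·) (Set.Icc a b) := by
  intro A B hAB x hx y hy hne
  by_contra! hxy
  obtain ⟨u, hux, huy⟩ := Set.not_subset.mp hxy.1
  obtain ⟨v, hvy, hvx⟩ := Set.not_subset.mp hxy.2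
  obtain ⟨n, hn⟩ := A.2.1
  obtain ⟨m, hm⟩ := B.2.2.1
  obtain ⟨p, hp, hup, hpx⟩ := exists_mem_MPlus_principalCut_le_le hx hn hm hux
  obtain ⟨q, hq, hvq, hqy⟩ := exists_mem_MPlus_principalCut_le_le hy hn hm hvy
  have hpq : p ≠ q := by
    rintro rfl
    exact huy (principalCut_le_iff.mp (hup.trans hqy))
  rcases h n m (hm (hAB hn)) hp hq hpq with hle | hle
  · exact huy (principalCut_le_iff.mp ((hup.trans hle).trans hqy))
  · exact hvx (principalCut_le_iff.mp ((hvq.trans hle).trans hpx))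
end

section
/- Let M be a 2-level poset with X = Min(M) and Y = Max(M) both nonempty, and such that every element of Y lies above at least two elements of X. Then every cut of M is principal (equivalently, the canonical embedding of M into its Dedekind–MacNeille completion M^D is surjective) if and only if any two distinct elements of X have at most one common upper bound in Y, i.e. if and only if M is the incidence graph of a semilinear space whose points are the elements of X and whose lines are the sets {x ∈ X : x < y} for y ∈ Y. -/
set_option autoImplicit false

/-!
Every cut is principal exactly when every nonempty subset that is bounded above has a
supremum. In a 2-level poset a subset with two distinct elements either contains a maximal
element, which is then its only upper bound, or consists of minimal elements, whose common
upper bounds are maximal. So suprema exist iff two distinct minimal elements never have two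
distinct common upper bounds.
-/

section Completion

variable {M : Type*} [PartialOrder M]

theorem principalCut_surjective_iff :
    Function.Surjective (principalCut : M → DMC M) ↔
      ∀ S : Set M, S.Nonempty → BddAbove S → ∃ a, IsLUB S a := by
  constructor
  · intro hsurj S hS hbdd
    obtain ⟨a, ha⟩ := hsurj ⟨_, isCut_lowerBounds_upperBounds hS hbdd⟩
    use a
    have hIic : Set.Iic a = lowerBounds (upperBounds S) := congrArg Subtype.val ha
    refine ⟨fun x hx => ?_, fun u hu => ?_⟩
    · exact (hIic ▸ subset_lowerBounds_upperBounds S hx : x ∈ Set.Iic a)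
    · exact (hIic ▸ Set.self_mem_Iic : a ∈ lowerBounds (upperBounds S)) hu
  · rintro hsup ⟨J, hJ, hbdd, hcut⟩
    obtain ⟨a, ha⟩ := hsup J hJ hbdd
    refine ⟨a, Subtype.ext (Set.Subset.antisymm (fun z (hz : z ≤ a) => ?_) ha.1)⟩
    exact (hcut ▸ fun u hu => le_trans hz (ha.2 hu) : z ∈ J)

end Completion

/-- For a 2-level poset: `M` is the incidence graph of a semilinear space on `Min(M)`. -/
def IsSemilinear (M : Type*) [PartialOrder M] : Prop :=
  ∀ x₁ x₂ : M, x₁ ∈ minSet M → x₂ ∈ minSet M → x₁ ≠ x₂ →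
    ∀ y₁ y₂ : M, y₁ ∈ maxSet M → y₂ ∈ maxSet M →
      x₁ < y₁ → x₂ < y₁ → x₁ < y₂ → x₂ < y₂ → y₁ = y₂

section TwoLevel

variable {M : Type*} [PartialOrder M]

theorem IsMin.lt_of_le_of_le {x₁ x₂ u : M} (hx₁ : IsMin x₁) (hne : x₁ ≠ x₂) (h₁ : x₁ ≤ u)
    (h₂ : x₂ ≤ u) : x₁ < u :=
  h₁.lt_of_ne fun h => hne (hx₁.eq_of_ge (h ▸ h₂))

theorem IsTwoLevel.isMax_of_lt (h2lev : IsTwoLevel M) {x y : M} (h : x < y) : IsMax y :=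
  (h2lev y).resolve_left fun hy => hy.not_lt h

theorem IsTwoLevel.upperBounds_subsingleton (h2lev : IsTwoLevel M) (hsemi : IsSemilinear M)
    {S : Set M} (hS : S.Nontrivial) : (upperBounds S).Subsingleton := by
  intro u hu v hv
  obtain ⟨x₁, hx₁S, x₂, hx₂S, hne⟩ := hS
  rcases h2lev x₁ with hx₁ | hx₁
  swap
  · exact (hx₁.eq_of_ge (hu hx₁S)).trans (hx₁.eq_of_ge (hv hx₁S)).symm
  rcases h2lev x₂ with hx₂ | hx₂
  swap
  · exact (hx₂.eq_of_ge (hu hx₂S)).trans (hx₂.eq_of_ge (hv hx₂S)).symm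
  have h₁u := hx₁.lt_of_le_of_le hne (hu hx₁S) (hu hx₂S)
  have h₁v := hx₁.lt_of_le_of_le hne (hv hx₁S) (hv hx₂S)
  have h₂u := hx₂.lt_of_le_of_le hne.symm (hu hx₂S) (hu hx₁S)
  have h₂v := hx₂.lt_of_le_of_le hne.symm (hv hx₂S) (hv hx₁S)
  exact hsemi x₁ x₂ hx₁ hx₂ hne u v (h2lev.isMax_of_lt h₁u) (h2lev.isMax_of_lt h₁v)
    h₁u h₂u h₁v h₂v

theorem IsTwoLevel.exists_isLUB (h2lev : IsTwoLevel M) (hsemi : IsSemilinear M) {S : Set M}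
    (hS : S.Nonempty) (hbdd : BddAbove S) : ∃ a, IsLUB S a := by
  rcases hS.exists_eq_singleton_or_nontrivial with ⟨x, rfl⟩ | hS
  · exact ⟨x, isLUB_singleton⟩
  obtain ⟨u, hu⟩ := hbdd
  exact ⟨u, hu, fun v hv => (h2lev.upperBounds_subsingleton hsemi hS hu hv).le⟩

theorem IsTwoLevel.isSemilinear (h2lev : IsTwoLevel M)
    (hsup : ∀ S : Set M, S.Nonempty → BddAbove S → ∃ a, IsLUB S a) : IsSemilinear M := by
  intro x₁ x₂ hx₁ _ hne y₁ y₂ _ _ h₁₁ h₂₁ h₁₂ h₂₂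
  obtain ⟨a, ha⟩ := hsup {x₁, x₂} (Set.insert_nonempty _ _)
    ⟨y₁, by simp [h₁₁.le, h₂₁.le]⟩
  have hx₁a : x₁ ≤ a := ha.1 (Set.mem_insert _ _)
  have hx₂a : x₂ ≤ a := ha.1 (Set.mem_insert_of_mem _ rfl)
  have hamax : IsMax a := h2lev.isMax_of_lt (hx₁.lt_of_le_of_le hne hx₁a hx₂a)
  have hay₁ : a ≤ y₁ := ha.2 (by simp [h₁₁.le, h₂₁.le])
  have hay₂ : a ≤ y₂ := ha.2 (by simp [h₁₂.le, h₂₂.le])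
  exact (hamax.eq_of_ge hay₁).trans (hamax.eq_of_ge hay₂).symm

end TwoLevel

theorem dm_complete_iff_semilinear_general (M : Type*) [PartialOrder M]
    (h2lev : IsTwoLevel M) :
    Function.Surjective (fun a : M => principalCut a) ↔
      (∀ x₁ x₂ : M, x₁ ∈ minSet M → x₂ ∈ minSet M → x₁ ≠ x₂ →
        ∀ y₁ y₂ : M, y₁ ∈ maxSet M → y₂ ∈ maxSet M →
          x₁ < y₁ → x₂ < y₁ → x₁ < y₂ → x₂ < y₂ → y₁ = y₂) :=
  principalCut_surjective_iff.trans
    ⟨h2lev.isSemilinear, fun hsemi _ hS hbdd => h2lev.exists_isLUB hsemi hS hbdd⟩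

/-- A 2-level poset with both levels nonempty, in which every maximal element
is above at least two minimal elements, is Dedekind–MacNeille complete (every cut is
principal) iff any two distinct minimal elements have at most one common upper bound among
the maximal elements, i.e. iff it is the incidence graph of a semilinear space. -/
theorem dm_complete_iff_semilinear (M : Type*) [PartialOrder M]
    (h2lev : IsTwoLevel M)
    (hmin : (minSet M).Nonempty) (hmax : (maxSet M).Nonempty)
    (hline : ∀ y ∈ maxSet M, ∃ x₁ x₂ : M, x₁ ∈ minSet M ∧ x₂ ∈ minSet M ∧ x₁ ≠ x₂ ∧
      x₁ < y ∧ x₂ < y) :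
    Function.Surjective (fun a : M => principalCut a) ↔
      (∀ x₁ x₂ : M, x₁ ∈ minSet M → x₂ ∈ minSet M → x₁ ≠ x₂ →
        ∀ y₁ y₂ : M, y₁ ∈ maxSet M → y₂ ∈ maxSet M →
          x₁ < y₁ → x₂ < y₁ → x₁ < y₂ → x₂ < y₂ → y₁ = y₂) :=
  dm_complete_iff_semilinear_general M h2lev
end

section
/- Let M be a countable connected 3-CS-homogeneous 2-level poset such that for some x ∈ Min(M) and y ∈ Max(M) with x < y the interval [x,y]^{M^D} is an infinite chain. Then either ↑Ram(M) = ↓Ram(M) or ↑Ram(M) ∩ ↓Ram(M) = ∅. -/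
set_option autoImplicit false

/-!
Automorphisms of `M` act on its Dedekind–MacNeille completion and preserve both kinds of
ramification points. An upward ramification point `inf {a, b}` is determined by the pair
`a, b`, which together with any common lower bound `m` forms a connected 3-element subposet
(a "V"); 3-CS-homogeneity moves any V onto any other, so `↑Ram(M)` is a single orbit.
Dually, using common upper bounds ("Λ"s), `↓Ram(M)` is a single orbit. Two orbits are
equal or disjoint.
-/

open Set Function

section Completion

variable {M N : Type*} [PartialOrder M] [PartialOrder N]

def OrderIso.dmcCongr (g : M ≃o N) : DMC M ≃o DMC N where
  toFun J := ⟨g '' J.val, J.prop.1.image g,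
    by rw [g.upperBounds_image]; exact J.prop.2.1.image g,
    by rw [g.upperBounds_image, g.lowerBounds_image, J.prop.2.2]⟩
  invFun J := ⟨g.symm '' J.val, J.prop.1.image g.symm,
    by rw [g.symm.upperBounds_image]; exact J.prop.2.1.image g.symm,
    by rw [g.symm.upperBounds_image, g.symm.lowerBounds_image, J.prop.2.2]⟩
  left_inv J := Subtype.ext (by simp)
  right_inv J := Subtype.ext (by simp)
  map_rel_iff' := image_subset_image_iff g.injective

@[simp]
theorem OrderIso.dmcCongr_principalCut (g : M ≃o N) (a : M) :
    g.dmcCongr (principalCut a) = principalCut (g a) :=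
  Subtype.ext (g.image_Iic a)

theorem OrderIso.isGLB_dmcCongr (g : M ≃o N) {a b : M} {p : DMC M}
    (h : IsGLB {principalCut a, principalCut b} p) :
    IsGLB {principalCut (g a), principalCut (g b)} (g.dmcCongr p) := by
  simpa [image_pair] using g.dmcCongr.isGLB_image'.mpr h

theorem OrderIso.isLUB_dmcCongr (g : M ≃o N) {a b : M} {p : DMC M}
    (h : IsLUB {principalCut a, principalCut b} p) :
    IsLUB {principalCut (g a), principalCut (g b)} (g.dmcCongr p) := by
  simpa [image_pair] using g.dmcCongr.isLUB_image'.mpr h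

theorem OrderIso.dmcCongr_mem_upRam (g : M ≃o N) {p : DMC M} (hp : p ∈ upRam M) :
    g.dmcCongr p ∈ upRam N := by
  obtain ⟨a, b, hab, hba, h⟩ := hp
  exact ⟨g a, g b, by simpa using hab, by simpa using hba, g.isGLB_dmcCongr h⟩

theorem OrderIso.dmcCongr_mem_downRam (g : M ≃o N) {p : DMC M} (hp : p ∈ downRam M) :
    g.dmcCongr p ∈ downRam N := by
  obtain ⟨a, b, hab, hba, h⟩ := hp
  exact ⟨g a, g b, by simpa using hab, by simpa using hba, g.isLUB_dmcCongr h⟩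

theorem exists_le_le_of_isGLB_principalCut {a b : M} {p : DMC M}
    (h : IsGLB {principalCut a, principalCut b} p) : ∃ m, m ≤ a ∧ m ≤ b := by
  obtain ⟨m, hm⟩ := p.prop.1
  exact ⟨m, h.1 (mem_insert _ _) hm, h.1 (mem_insert_of_mem _ rfl) hm⟩

theorem exists_le_le_of_isLUB_principalCut {a b : M} {p : DMC M}
    (h : IsLUB {principalCut a, principalCut b} p) : ∃ u, a ≤ u ∧ b ≤ u := by
  obtain ⟨u, hu⟩ := p.prop.2.1
  exact ⟨u, hu (h.1 (mem_insert _ _) le_rfl), hu (h.1 (mem_insert_of_mem _ rfl) le_rfl)⟩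

end Completion

section Homogeneity

variable {M : Type*} [PartialOrder M]

theorem SimpleGraph.induce_range_connected_of_adj {V ι : Type*} {G : SimpleGraph V}
    {v : ι → V} (i₀ : ι) (h : ∀ i, i ≠ i₀ → G.Adj (v i₀) (v i)) :
    (G.induce (range v)).Connected := by
  have hreach : ∀ i, (G.induce (range v)).Reachable ⟨v i₀, i₀, rfl⟩ ⟨v i, i, rfl⟩ := by
    intro i
    by_cases hi : i = i₀
    · subst hi; rfl
    · exact SimpleGraph.Adj.reachable (h i hi)
  refine (SimpleGraph.connected_iff _).mpr ⟨?_, ⟨⟨v i₀, i₀, rfl⟩⟩⟩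
  rintro ⟨_, i, rfl⟩ ⟨_, j, rfl⟩
  exact (hreach i).symm.trans (hreach j)

noncomputable def rangeOrderIsoOfLeIff {ι : Type*} {v w : ι → M} (hv : Injective v) (hw : Injective w)
    (hvw : ∀ i j, v i ≤ v j ↔ w i ≤ w j) : range v ≃o range w where
  toEquiv := (Equiv.ofInjective v hv).symm.trans (Equiv.ofInjective w hw)
  map_rel_iff' {a b} := by
    obtain ⟨_, i, rfl⟩ := a
    obtain ⟨_, j, rfl⟩ := b
    simp [← Subtype.coe_le_coe, Equiv.ofInjective_symm_apply, hvw]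

/-- `r` is the common order table of the two triples; `hr₀` makes them connected in the
comparability graph. -/
theorem ThreeCSHomogeneous.exists_apply_eq (hhom : ThreeCSHomogeneous M) {v w : Fin 3 → M}
    (r : Fin 3 → Fin 3 → Prop) (hv : ∀ i j, v i ≤ v j ↔ r i j) (hw : ∀ i j, w i ≤ w j ↔ r i j)
    (hr : ∀ i j, r i j → r j i → i = j) (hr₀ : ∀ i, r 0 i ∨ r i 0) :
    ∃ g : M ≃o M, ∀ i, g (v i) = w i := by
  have injective {u : Fin 3 → M} (hu : ∀ i j, u i ≤ u j ↔ r i j) : Injective u :=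
    fun i j h => hr i j ((hu i j).1 h.le) ((hu j i).1 h.ge)
  have connected {u : Fin 3 → M} (hu : ∀ i j, u i ≤ u j ↔ r i j) :
      ((compGraph M).induce (range u)).Connected := by
    refine SimpleGraph.induce_range_connected_of_adj 0 fun i hi => ?_
    have hne : u 0 ≠ u i := (injective hu).ne (Ne.symm hi)
    rcases hr₀ i with h | h
    · exact Or.inl (lt_of_le_of_ne ((hu 0 i).2 h) hne)
    · exact Or.inr (lt_of_le_of_ne ((hu i 0).2 h) hne.symm)
  have card {u : Fin 3 → M} (hu : ∀ i j, u i ≤ u j ↔ r i j) : (range u).ncard = 3 := by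
    rw [ncard_range_of_injective (injective hu), Nat.card_eq_fintype_card, Fintype.card_fin]
  obtain ⟨g, hg⟩ := hhom _ _ (card hv) (card hw) (connected hv) (connected hw)
    (rangeOrderIsoOfLeIff (injective hv) (injective hw) fun i j => (hv i j).trans (hw i j).symm)
  exact ⟨g, fun i => by simpa [rangeOrderIsoOfLeIff] using hg ⟨v i, i, rfl⟩⟩

theorem ThreeCSHomogeneous.exists_apply_eq_apply_eq_of_lowerBound (hhom : ThreeCSHomogeneous M)
    {m a b m' a' b' : M} (hma : m ≤ a) (hmb : m ≤ b) (hab : IncompRel (· ≤ ·) a b)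
    (hma' : m' ≤ a') (hmb' : m' ≤ b') (hab' : IncompRel (· ≤ ·) a' b') :
    ∃ g : M ≃o M, g a = a' ∧ g b = b' := by
  have table {m a b : M} (hma : m ≤ a) (hmb : m ≤ b) (hab : IncompRel (· ≤ ·) a b) (i j) :
      ![m, a, b] i ≤ ![m, a, b] j ↔ i = j ∨ i = 0 := by
    have ham : ¬ a ≤ m := fun h => hab.1 (h.trans hmb)
    have hbm : ¬ b ≤ m := fun h => hab.2 (h.trans hma)
    fin_cases i <;> fin_cases j <;> simp [hma, hmb, hab.1, hab.2, ham, hbm]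
  obtain ⟨g, hg⟩ := hhom.exists_apply_eq _ (table hma hmb hab) (table hma' hmb' hab')
    (by decide) (by decide)
  exact ⟨g, hg 1, hg 2⟩

theorem ThreeCSHomogeneous.exists_apply_eq_apply_eq_of_upperBound (hhom : ThreeCSHomogeneous M)
    {u a b u' a' b' : M} (hau : a ≤ u) (hbu : b ≤ u) (hab : IncompRel (· ≤ ·) a b)
    (hau' : a' ≤ u') (hbu' : b' ≤ u') (hab' : IncompRel (· ≤ ·) a' b') :
    ∃ g : M ≃o M, g a = a' ∧ g b = b' := by
  have table {u a b : M} (hau : a ≤ u) (hbu : b ≤ u) (hab : IncompRel (· ≤ ·) a b) (i j) :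
      ![u, a, b] i ≤ ![u, a, b] j ↔ i = j ∨ j = 0 := by
    have hua : ¬ u ≤ a := fun h => hab.2 (hbu.trans h)
    have hub : ¬ u ≤ b := fun h => hab.1 (hau.trans h)
    fin_cases i <;> fin_cases j <;> simp [hau, hbu, hab.1, hab.2, hua, hub]
  obtain ⟨g, hg⟩ := hhom.exists_apply_eq _ (table hau hbu hab) (table hau' hbu' hab')
    (by decide) (by decide)
  exact ⟨g, hg 1, hg 2⟩

theorem ThreeCSHomogeneous.exists_dmcCongr_eq_of_mem_upRam (hhom : ThreeCSHomogeneous M)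
    {p q : DMC M} (hp : p ∈ upRam M) (hq : q ∈ upRam M) :
    ∃ g : M ≃o M, g.dmcCongr p = q := by
  obtain ⟨a, b, hab, hba, hp⟩ := hp
  obtain ⟨a', b', hab', hba', hq⟩ := hq
  obtain ⟨m, hma, hmb⟩ := exists_le_le_of_isGLB_principalCut hp
  obtain ⟨m', hma', hmb'⟩ := exists_le_le_of_isGLB_principalCut hq
  obtain ⟨g, rfl, rfl⟩ :=
    hhom.exists_apply_eq_apply_eq_of_lowerBound hma hmb ⟨hab, hba⟩ hma' hmb' ⟨hab', hba'⟩
  exact ⟨g, (g.isGLB_dmcCongr hp).unique hq⟩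

theorem ThreeCSHomogeneous.exists_dmcCongr_eq_of_mem_downRam (hhom : ThreeCSHomogeneous M)
    {p q : DMC M} (hp : p ∈ downRam M) (hq : q ∈ downRam M) :
    ∃ g : M ≃o M, g.dmcCongr p = q := by
  obtain ⟨a, b, hab, hba, hp⟩ := hp
  obtain ⟨a', b', hab', hba', hq⟩ := hq
  obtain ⟨u, hau, hbu⟩ := exists_le_le_of_isLUB_principalCut hp
  obtain ⟨u', hau', hbu'⟩ := exists_le_le_of_isLUB_principalCut hq
  obtain ⟨g, rfl, rfl⟩ :=
    hhom.exists_apply_eq_apply_eq_of_upperBound hau hbu ⟨hab, hba⟩ hau' hbu' ⟨hab', hba'⟩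
  exact ⟨g, (g.isLUB_dmcCongr hp).unique hq⟩

end Homogeneity

theorem upRam_eq_or_disjoint_downRam_general (M : Type*) [PartialOrder M]
    (hhom : ThreeCSHomogeneous M) :
    upRam M = downRam M ∨ upRam M ∩ downRam M = ∅ := by
  rcases (upRam M ∩ downRam M).eq_empty_or_nonempty with h | ⟨p, hpu, hpd⟩
  · exact Or.inr h
  refine Or.inl (Subset.antisymm (fun q hq => ?_) fun q hq => ?_)
  · obtain ⟨g, rfl⟩ := hhom.exists_dmcCongr_eq_of_mem_upRam hpu hq
    exact g.dmcCongr_mem_downRam hpd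
  · obtain ⟨g, rfl⟩ := hhom.exists_dmcCongr_eq_of_mem_downRam hpd hq
    exact g.dmcCongr_mem_upRam hpu

/-- In a countable connected 3-CS-homogeneous 2-level poset whose
completion-interval is an infinite chain, the sets of upward and downward ramification
points are either equal or disjoint. -/
theorem upRam_eq_or_disjoint_downRam (M : Type*) [PartialOrder M] [Countable M]
    (h2lev : IsTwoLevel M)
    (hconn : (compGraph M).Connected)
    (hhom : ThreeCSHomogeneous M)
    (x y : M) (hx : x ∈ minSet M) (hy : y ∈ maxSet M) (hxy : x < y)
    (hinf : (Set.Icc (principalCut x) (principalCut y)).Infinite)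
    (hchain : IsChain (· ≤ ·) (Set.Icc (principalCut x) (principalCut y))) :
    upRam M = downRam M ∨ upRam M ∩ downRam M = ∅ :=
  upRam_eq_or_disjoint_downRam_general M hhom
end

section
/- Let Γ be a countable connected locally 2-arc-transitive bipartite graph, M its associated 2-level poset, and suppose that every interval [x,y]^{M^D} with x ∈ Min(M), y ∈ Max(M), x < y is order-isomorphic to 1 + ℤ + 1. Let D be the digraph on M^+ \ M with an edge x → y iff x > y in M^D and no element of M^D lies strictly between y and x. If D is locally finite (every vertex has only finitely many in-neighbours and only finitely many out-neighbours), then D is strongly transitive. -/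
set_option autoImplicit false

section Digraph

/-- Automorphisms of a digraph `(V, E)`. -/
def DigraphAut {V : Type*} (E : V → V → Prop) : Type _ :=
  {g : V ≃ V // ∀ x y : V, E (g x) (g y) ↔ E x y}

/-- Descendants of a vertex: vertices reachable by a directed path (including itself). -/
def descSet {V : Type*} (E : V → V → Prop) (u : V) : Set V :=
  {v | Relation.ReflTransGen E u v}

/-- Ancestors of a vertex. -/
def ancSet {V : Type*} (E : V → V → Prop) (u : V) : Set V :=
  {v | Relation.ReflTransGen E v u}

/-- Highly arc-transitive digraph: vertex-transitive and transitive on `s`-arcs for all `s ≥ 1`. -/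
def HighlyArcTransitive {V : Type*} (E : V → V → Prop) : Prop :=
  (∀ u v : V, ∃ g : DigraphAut E, g.val u = v) ∧
  (∀ s : ℕ, 1 ≤ s → ∀ a b : ℕ → V,
    (∀ i < s, E (a i) (a (i + 1))) → (∀ i < s, E (b i) (b (i + 1))) →
    ∃ g : DigraphAut E, ∀ i ≤ s, g.val (a i) = b i)

/-- The intersection property: nonempty intersections of principal ideals are principal. -/
def IntersectionProperty {V : Type*} (E : V → V → Prop) : Prop :=
  ∀ x y : V, (descSet E x ∩ descSet E y).Nonempty →
    ∃ z : V, descSet E x ∩ descSet E y = descSet E z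

/-- A directed line: a `ℤ`-indexed sequence of distinct vertices with consecutive edges. -/
def IsDirectedLine {V : Type*} (E : V → V → Prop) (x : ℤ → V) : Prop :=
  Function.Injective x ∧ ∀ i : ℤ, E (x i) (x (i + 1))

/-- A `Y`-configuration: two directed lines agreeing exactly on indices `i ≥ 0`. -/
def IsYConfig {V : Type*} (E : V → V → Prop) (x y : ℤ → V) : Prop :=
  IsDirectedLine E x ∧ IsDirectedLine E y ∧ ∀ i : ℤ, x i = y i ↔ 0 ≤ i

/-- A `Ȳ`-configuration: two directed lines agreeing exactly on indices `i ≤ 0`. -/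
def IsYBarConfig {V : Type*} (E : V → V → Prop) (x y : ℤ → V) : Prop :=
  IsDirectedLine E x ∧ IsDirectedLine E y ∧ ∀ i : ℤ, x i = y i ↔ i ≤ 0

/-- Strong transitivity: the automorphism group is transitive on `Y`-configurations and
on `Ȳ`-configurations. -/
def StronglyTransitive {V : Type*} (E : V → V → Prop) : Prop :=
  (∀ x y x' y' : ℤ → V, IsYConfig E x y → IsYConfig E x' y' →
    ∃ g : DigraphAut E, g.val '' (Set.range x ∪ Set.range y) = Set.range x' ∪ Set.range y') ∧
  (∀ x y x' y' : ℤ → V, IsYBarConfig E x y → IsYBarConfig E x' y' →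
    ∃ g : DigraphAut E, g.val '' (Set.range x ∪ Set.range y) = Set.range x' ∪ Set.range y')

end Digraph

/-- The digraph on `M⁺ \ M` with an edge `x → y` iff `x` covers `y` in `M^D`. -/
def coverDigraph (M : Type*) [PartialOrder M] :
    ↥(MPlus M \ principalSet M) → ↥(MPlus M \ principalSet M) → Prop :=
  fun p q => (q : DMC M) ⋖ (p : DMC M)


/-!
The intervals `[a, b]` of `M^D` are chains, so a cut has at most one lower cover containing a
given element of `M` and at most one upper cover below a given element of `M`. Hence the branch
point of a `Y` is the meet `↓b ∩ ↓b'` of elements above its two branches and that of a `Ȳ` is the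
join of elements below them, and an automorphism of `M` matching these anchors carries a finite
window of one configuration onto the other, one cover at a time. Such automorphisms exist because
in a connected bipartite graph without leaves local 2-arc transitivity gives 2-arc transitivity
on each level. By local finiteness the window automorphisms take finitely many values at each
vertex of the component of the branch point, so an ultralimit of them matches the whole
configurations.
-/
open Set

namespace DMC

variable {M N : Type*} [PartialOrder M] [PartialOrder N]

lemma lowerBounds_upperBounds (q : DMC M) : lowerBounds (upperBounds q.1) = q.1 := q.2.2.2

lemma mem_of_le_of_mem (q : DMC M) {a b : M} (hab : a ≤ b) (hb : b ∈ q.1) : a ∈ q.1 := by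
  rw [← q.lowerBounds_upperBounds] at hb ⊢
  exact fun u hu => hab.trans (hb hu)

lemma principalCut_le_iff {a : M} {q : DMC M} : principalCut a ≤ q ↔ a ∈ q.1 :=
  ⟨fun h => h le_rfl, fun h _ hz => q.mem_of_le_of_mem hz h⟩

lemma le_principalCut_iff {b : M} {q : DMC M} : q ≤ principalCut b ↔ b ∈ upperBounds q.1 :=
  Iff.rfl

lemma eq_principalCut {q : DMC M} {a : M} (ha : a ∈ q.1) (ha' : a ∈ upperBounds q.1) :
    q = principalCut a :=
  le_antisymm (le_principalCut_iff.2 ha') (principalCut_le_iff.2 ha)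

lemma lt_of_mem_of_mem_upperBounds {q : DMC M} (hq : q ∉ principalSet M) {a b : M}
    (ha : a ∈ q.1) (hb : b ∈ upperBounds q.1) : a < b :=
  (hb ha).lt_of_ne <| by
    rintro rfl
    exact hq ⟨a, (eq_principalCut ha hb).symm⟩

def ofLowerBounds (t : Set M) (ht : t.Nonempty) (ht' : (lowerBounds t).Nonempty) : DMC M :=
  ⟨lowerBounds t, ht', ht.mono (subset_upperBounds_lowerBounds t),
    gc_upperBounds_lowerBounds.u_l_u_eq_u (OrderDual.toDual t)⟩

def map (σ : M ≃o N) (q : DMC M) : DMC N :=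
  ⟨σ '' q.1, q.2.1.image σ, by rw [σ.upperBounds_image]; exact q.2.2.1.image σ,
    by rw [σ.upperBounds_image, σ.lowerBounds_image, q.lowerBounds_upperBounds]⟩

def congr_s11 (σ : M ≃o N) : DMC M ≃o DMC N where
  toFun := map σ
  invFun := map σ.symm
  left_inv q := Subtype.ext (σ.symm_image_image q.1)
  right_inv q := Subtype.ext (σ.image_symm_image q.1)
  map_rel_iff' := image_subset_image_iff σ.injective

@[simp] lemma congr_val (σ : M ≃o N) (q : DMC M) : (congr_s11 σ q).1 = σ '' q.1 := rfl

lemma congr_symm (σ : M ≃o N) : (congr_s11 σ).symm = congr_s11 σ.symm := rfl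

lemma congr_principalCut_s11 (σ : M ≃o N) (a : M) : congr_s11 σ (principalCut a) = principalCut (σ a) :=
  Subtype.ext (σ.image_Iic a)

lemma image_congr_pair (σ : M ≃o N) (a b : M) :
    congr_s11 σ '' {principalCut a, principalCut b} = {principalCut (σ a), principalCut (σ b)} := by
  rw [image_pair, congr_principalCut_s11, congr_principalCut_s11]

lemma mapsTo_congr_principalSet (σ : M ≃o N) :
    MapsTo (congr_s11 σ) (principalSet M) (principalSet N) := by
  rintro _ ⟨a, rfl⟩
  exact ⟨σ a, (congr_principalCut_s11 σ a).symm⟩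

lemma mapsTo_congr_upRam (σ : M ≃o N) : MapsTo (congr_s11 σ) (upRam M) (upRam N) := by
  rintro q ⟨a, b, hab, hba, hq⟩
  refine ⟨σ a, σ b, by simpa using hab, by simpa using hba, ?_⟩
  rw [← image_congr_pair]
  exact (congr_s11 σ).isGLB_image'.2 hq

lemma mapsTo_congr_downRam (σ : M ≃o N) : MapsTo (congr_s11 σ) (downRam M) (downRam N) := by
  rintro q ⟨a, b, hab, hba, hq⟩
  refine ⟨σ a, σ b, by simpa using hab, by simpa using hba, ?_⟩
  rw [← image_congr_pair]
  exact (congr_s11 σ).isLUB_image'.2 hq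

lemma mapsTo_congr_nonprincipal (σ : M ≃o N) :
    MapsTo (congr_s11 σ) (MPlus M \ principalSet M) (MPlus N \ principalSet N) := by
  rintro q ⟨(hq | hq) | hq, hq'⟩
  · exact absurd hq hq'
  all_goals refine ⟨?_, fun h => hq' ?_⟩
  · exact Or.inl (Or.inr (mapsTo_congr_upRam σ hq))
  · simpa [← congr_symm] using mapsTo_congr_principalSet σ.symm h
  · exact Or.inr (mapsTo_congr_downRam σ hq)
  · simpa [← congr_symm] using mapsTo_congr_principalSet σ.symm h

end DMC

def coverDigraphAut {M : Type*} [PartialOrder M] (σ : M ≃o M) : DigraphAut (coverDigraph M) :=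
  ⟨(DMC.congr_s11 σ).toEquiv.subtypeEquiv fun q =>
      ⟨fun hq => DMC.mapsTo_congr_nonprincipal σ hq, fun hq => by
        simpa [← DMC.congr_symm] using DMC.mapsTo_congr_nonprincipal σ.symm hq⟩,
    fun _ _ => apply_covBy_apply_iff (DMC.congr_s11 σ)⟩

section Intervals

variable {M : Type*} [PartialOrder M]

def HasLineIntervals (M : Type*) [PartialOrder M] : Prop :=
  ∀ a b : M, a < b →
    Nonempty (↥(Icc (principalCut a) (principalCut b)) ≃o WithBot (WithTop ℤ))

def HasChainIntervals (M : Type*) [PartialOrder M] : Prop :=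
  ∀ a b : M, IsChain (· ≤ ·) (Icc (principalCut a) (principalCut b))

lemma exists_between_of_orderIso {P : Type*} [PartialOrder P] {x y : P}
    (e : ↥(Icc x y) ≃o WithBot (WithTop ℤ)) : ∃ z, x < z ∧ z < y := by
  have hbot : (⊥ : WithBot (WithTop ℤ)) < 0 := WithBot.bot_lt_coe 0
  have htop : (0 : WithBot (WithTop ℤ)) < ⊤ := WithBot.coe_lt_coe.2 (WithTop.coe_lt_top 0)
  let z := e.symm 0
  refine ⟨z, z.2.1.lt_of_ne fun h => ?_, z.2.2.lt_of_ne fun h => ?_⟩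
  · have : z ≤ e.symm ⊥ := by
      change z.1 ≤ _
      rw [← h]
      exact (e.symm ⊥).2.1
    exact hbot.not_ge (e.symm.le_iff_le.1 this)
  · have : e.symm ⊤ ≤ z := by
      change _ ≤ z.1
      rw [h]
      exact (e.symm ⊤).2.2
    exact htop.not_ge (e.symm.le_iff_le.1 this)

namespace HasLineIntervals

lemma hasChainIntervals (h : HasLineIntervals M) : HasChainIntervals M := by
  intro a b q hq r hr _
  rcases (DMC.principalCut_le_iff.1 (hq.1.trans hq.2) : a ≤ b).eq_or_lt with rfl | hab
  · exact Or.inl (hq.2.trans hr.1)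
  · obtain ⟨e⟩ := h a b hab
    exact (le_total (e ⟨q, hq⟩) (e ⟨r, hr⟩)).imp e.le_iff_le.1 e.le_iff_le.1

lemma exists_lt_ne (h : HasLineIntervals M) {a b : M} (hab : a < b) :
    ∃ b₂, a < b₂ ∧ b₂ ≠ b := by
  obtain ⟨e⟩ := h a b hab
  obtain ⟨q, haq, hqb⟩ := exists_between_of_orderIso e
  have ha : a ∈ q.1 := DMC.principalCut_le_iff.1 haq.le
  obtain ⟨b₂, hb₂, hne⟩ : ∃ b₂ ∈ upperBounds q.1, b₂ ≠ b := by
    by_contra! hub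
    refine hqb.not_ge fun z hz => ?_
    rw [← q.lowerBounds_upperBounds]
    exact fun w hw => (hub w hw).symm ▸ hz
  refine ⟨b₂, (hb₂ ha).lt_of_ne ?_, hne⟩
  rintro rfl
  exact haq.ne (DMC.eq_principalCut ha hb₂).symm

lemma exists_gt_ne (h : HasLineIntervals M) {a b : M} (hab : a < b) :
    ∃ a₂, a₂ < b ∧ a₂ ≠ a := by
  obtain ⟨e⟩ := h a b hab
  obtain ⟨q, haq, hqb⟩ := exists_between_of_orderIso e
  have hb : b ∈ upperBounds q.1 := DMC.le_principalCut_iff.1 hqb.le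
  obtain ⟨a₂, ha₂, hne⟩ : ∃ a₂ ∈ q.1, ¬ a₂ ≤ a := by
    by_contra! hsub
    exact haq.not_ge fun z hz => hsub z hz
  refine ⟨a₂, (hb ha₂).lt_of_ne ?_, fun h => hne h.le⟩
  rintro rfl
  exact hqb.ne (DMC.eq_principalCut ha₂ hb)

lemma exists_adj_ne (h : HasLineIntervals M) {p q : M} (hpq : (compGraph M).Adj p q) :
    ∃ z, (compGraph M).Adj q z ∧ z ≠ p := by
  rcases hpq with hpq | hqp
  · obtain ⟨z, hz, hne⟩ := h.exists_gt_ne hpq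
    exact ⟨z, Or.inr hz, hne⟩
  · obtain ⟨z, hz, hne⟩ := h.exists_lt_ne hqp
    exact ⟨z, Or.inl hz, hne⟩

end HasLineIntervals

namespace HasChainIntervals

lemma le_total_of_mem (hch : HasChainIntervals M) {q r : DMC M} {a b : M} (hq : a ∈ q.1)
    (hr : a ∈ r.1) (hbq : b ∈ upperBounds q.1) (hbr : b ∈ upperBounds r.1) : q ≤ r ∨ r ≤ q :=
  (hch a b).total ⟨DMC.principalCut_le_iff.2 hq, hbq⟩ ⟨DMC.principalCut_le_iff.2 hr, hbr⟩

lemma eq_of_covBy_of_mem (hch : HasChainIntervals M) {q r r' : DMC M} (hr : r ⋖ q)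
    (hr' : r' ⋖ q) {a : M} (ha : a ∈ r.1) (ha' : a ∈ r'.1) : r = r' := by
  obtain ⟨b, hb⟩ := q.2.2.1
  rcases hch.le_total_of_mem ha ha' (fun z hz => hb (hr.le hz)) (fun z hz => hb (hr'.le hz))
    with hle | hle
  · exact ((hr.eq_or_eq hle hr'.le).resolve_right hr'.ne).symm
  · exact (hr'.eq_or_eq hle hr.le).resolve_right hr.ne

lemma eq_of_covBy_of_mem_upperBounds (hch : HasChainIntervals M) {q s s' : DMC M} (hs : q ⋖ s)
    (hs' : q ⋖ s') {b : M} (hb : b ∈ upperBounds s.1) (hb' : b ∈ upperBounds s'.1) : s = s' := by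
  obtain ⟨a, ha⟩ := q.2.1
  rcases hch.le_total_of_mem (hs.le ha) (hs'.le ha) hb hb' with hle | hle
  · exact (hs'.eq_or_eq hs.le hle).resolve_left hs.ne'
  · exact ((hs.eq_or_eq hs'.le hle).resolve_left hs'.ne').symm

/-- The branch point of a `Y` is the meet of any two elements of `M` above its two branches. -/
lemma eq_lowerBounds_pair_of_covBy (hch : HasChainIntervals M) {q r r' : DMC M} (hr : q ⋖ r)
    (hr' : q ⋖ r') (hne : r ≠ r') {b b' : M} (hb : b ∈ upperBounds r.1)
    (hb' : b' ∈ upperBounds r'.1) : q.1 = lowerBounds {b, b'} := by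
  obtain ⟨a, ha⟩ := q.2.1
  have hqK : q.1 ⊆ lowerBounds {b, b'} := by
    rintro z hz _ (rfl | rfl)
    exacts [hb (hr.le hz), hb' (hr'.le hz)]
  let K := DMC.ofLowerBounds {b, b'} (insert_nonempty _ _) ⟨a, hqK ha⟩
  refine hqK.antisymm fun z hz => ?_
  by_contra hzq
  have hlt : q < K := lt_of_le_not_ge hqK fun h => hzq (h hz)
  have hrK : r ≤ K := by
    rcases hch.le_total_of_mem (r := K) (hr.le ha) (hqK ha) hb (fun w hw => hw (mem_insert b _))
      with h | h
    · exact h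
    · exact ((hr.eq_or_eq hlt.le h).resolve_left hlt.ne').ge
  exact hne (hch.eq_of_covBy_of_mem_upperBounds hr hr' (fun w hw => hrK hw (by simp)) hb')

/-- The branch point of a `Ȳ` is the join of any two elements of `M` below its two branches. -/
lemma eq_lowerBounds_upperBounds_pair_of_covBy (hch : HasChainIntervals M) {q r r' : DMC M}
    (hr : r ⋖ q) (hr' : r' ⋖ q) (hne : r ≠ r') {a a' : M} (ha : a ∈ r.1) (ha' : a' ∈ r'.1) :
    q.1 = lowerBounds (upperBounds {a, a'}) := by
  have hub : upperBounds q.1 ⊆ upperBounds {a, a'} := by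
    rintro w hw _ (rfl | rfl)
    exacts [hw (hr.le ha), hw (hr'.le ha')]
  let L := DMC.ofLowerBounds (upperBounds {a, a'}) (q.2.2.1.mono hub)
    ⟨a, fun w hw => hw (mem_insert a _)⟩
  have hLq : L ≤ q := by
    change L.1 ⊆ q.1
    rw [← q.lowerBounds_upperBounds]
    exact lowerBounds_mono_set hub
  suffices hqL : q ≤ L from congrArg Subtype.val (hqL.antisymm hLq)
  by_contra hqL
  have hlt : L < q := lt_of_le_not_ge hLq hqL
  obtain ⟨b, hb⟩ := q.2.2.1
  have hLr : L ≤ r := by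
    rcases hch.le_total_of_mem (q := L) (fun w hw => hw (mem_insert a _)) ha
      (fun z hz => hb (hLq hz)) (fun z hz => hb (hr.le hz)) with h | h
    · exact h
    · exact ((hr.eq_or_eq h hlt.le).resolve_right hlt.ne).le
  exact hne (hch.eq_of_covBy_of_mem hr hr' (hLr fun w hw => hw (by simp)) ha')

lemma congr_eq_of_mem (hch : HasChainIntervals M) (σ : M ≃o M) {z z' : ℤ → DMC M}
    (hz : ∀ i, z (i + 1) ⋖ z i) (hz' : ∀ i, z' (i + 1) ⋖ z' i) (h0 : DMC.congr_s11 σ (z 0) = z' 0)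
    {m : ℤ} {a : M} (ha : a ∈ (z m).1) (ha' : σ a ∈ (z' m).1) {i : ℤ} (hi : 0 ≤ i) (him : i ≤ m) :
    DMC.congr_s11 σ (z i) = z' i := by
  have hanti := antitone_int_of_succ_le fun j => (hz j).le
  have hanti' := antitone_int_of_succ_le fun j => (hz' j).le
  induction i, hi using Int.leInduction with
  | base => exact h0
  | succ i _ ih =>
    refine hch.eq_of_covBy_of_mem (q := z' i) ?_ (hz' i) ⟨a, hanti him ha, rfl⟩ (hanti' him ha')
    rw [← ih (by omega)]
    exact (apply_covBy_apply_iff (DMC.congr_s11 σ)).2 (hz i)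

lemma congr_eq_of_mem_upperBounds (hch : HasChainIntervals M) (σ : M ≃o M) {z z' : ℤ → DMC M}
    (hz : ∀ i, z (i + 1) ⋖ z i) (hz' : ∀ i, z' (i + 1) ⋖ z' i) (h0 : DMC.congr_s11 σ (z 0) = z' 0)
    {m : ℤ} {b : M} (hb : b ∈ upperBounds (z (-m)).1) (hb' : σ b ∈ upperBounds (z' (-m)).1)
    {i : ℤ} (hmi : -m ≤ i) (hi : i ≤ 0) : DMC.congr_s11 σ (z i) = z' i := by
  have hanti := antitone_int_of_succ_le fun j => (hz j).le
  have hanti' := antitone_int_of_succ_le fun j => (hz' j).le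
  induction i, hi using Int.leInductionDown with
  | base => exact h0
  | pred i _ ih =>
    refine hch.eq_of_covBy_of_mem_upperBounds (q := z' i) ?_ (by simpa using hz' (i - 1)) ?_
      fun w hw => hb' (hanti' hmi hw)
    · rw [← ih (by omega)]
      exact (apply_covBy_apply_iff (DMC.congr_s11 σ)).2 (by simpa using hz (i - 1))
    · rintro _ ⟨w, hw, rfl⟩
      exact σ.monotone (hb (hanti hmi hw))

end HasChainIntervals

end Intervals

section TwoLevel

variable {M : Type*} [PartialOrder M]

namespace IsTwoLevel

lemma isMin_of_lt_s11 (h : IsTwoLevel M) {a b : M} (hab : a < b) : IsMin a :=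
  (h a).resolve_right (not_isMax_of_lt hab)

lemma isMax_of_lt_s11 (h : IsTwoLevel M) {a b : M} (hab : a < b) : IsMax b :=
  (h b).resolve_left (not_isMin_of_lt hab)

lemma lt_iff_s11 (h : IsTwoLevel M) {a b : M} : a < b ↔ (compGraph M).Adj a b ∧ IsMax b :=
  ⟨fun hab => ⟨Or.inl hab, h.isMax_of_lt_s11 hab⟩,
    fun ⟨hadj, hb⟩ => hadj.resolve_right fun hba => not_isMax_of_lt hba hb⟩

lemma isMax_iff_not_isMax_of_adj (h : IsTwoLevel M) {a b : M} (hadj : (compGraph M).Adj a b) :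
    IsMax a ↔ ¬ IsMax b := by
  rcases hadj with hab | hba
  · exact iff_of_false (not_isMax_of_lt hab) (not_not_intro (h.isMax_of_lt_s11 hab))
  · exact iff_of_true (h.isMax_of_lt_s11 hba) (not_isMax_of_lt hba)

lemma isMax_apply_iff (h : IsTwoLevel M) (g : compGraph M ≃g compGraph M) {u v : M}
    (p : (compGraph M).Walk u v) (hu : IsMax (g u) ↔ IsMax u) : IsMax (g v) ↔ IsMax v := by
  induction p with
  | nil => exact hu
  | cons hadj _ ih =>
    have h₁ := h.isMax_iff_not_isMax_of_adj hadj
    have h₂ := h.isMax_iff_not_isMax_of_adj (g.map_adj_iff.2 hadj)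
    exact ih (by tauto)

def toOrderIso (h : IsTwoLevel M) (hconn : (compGraph M).Connected)
    (g : compGraph M ≃g compGraph M) {m : M} (hm : IsMax (g m) ↔ IsMax m) : M ≃o M :=
  OrderIso.ofRelIsoLT ⟨g.toEquiv, fun {a b} => by
    simp only [h.lt_iff_s11]
    exact and_congr g.map_adj_iff (h.isMax_apply_iff g (hconn.preconnected m b).some hm)⟩

@[simp] lemma toOrderIso_apply (h : IsTwoLevel M) (hconn : (compGraph M).Connected)
    (g : compGraph M ≃g compGraph M) {m : M} (hm : IsMax (g m) ↔ IsMax m) (a : M) :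
    h.toOrderIso hconn g hm a = g a := rfl

end IsTwoLevel

def OrderTwoArcTransitive (M : Type*) [PartialOrder M] : Prop :=
  ∀ v₀ v₁ v₂ w₀ w₁ w₂ : M, IsTwoArc (compGraph M) v₀ v₁ v₂ → IsTwoArc (compGraph M) w₀ w₁ w₂ →
    (IsMax v₀ ↔ IsMax w₀) → ∃ σ : M ≃o M, σ v₀ = w₀ ∧ σ v₁ = w₁ ∧ σ v₂ = w₂

lemma OrderIso.adj_compGraph_apply (σ : M ≃o M) {a b : M} (h : (compGraph M).Adj a b) :
    (compGraph M).Adj (σ a) (σ b) :=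
  h.imp (fun h => σ.strictMono h) fun h => σ.strictMono h

lemma exists_orderIso_fix_of_adj (h2lev : IsTwoLevel M) (hconn : (compGraph M).Connected)
    (h2arc : LocallyTwoArcTransitive (compGraph M))
    (hdeg : ∀ p q : M, (compGraph M).Adj p q → ∃ z, (compGraph M).Adj q z ∧ z ≠ p)
    {m u w : M} (hu : (compGraph M).Adj m u)
    (hw : (compGraph M).Adj m w) : ∃ σ : M ≃o M, σ m = m ∧ σ u = w := by
  obtain ⟨z, hz, hzm⟩ := hdeg m u hu
  obtain ⟨z', hz', hz'm⟩ := hdeg m w hw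
  obtain ⟨g, hgm, hgu, -⟩ := h2arc m u z w z' ⟨hu, hz, hzm.symm⟩ ⟨hw, hz', hz'm.symm⟩
  exact ⟨h2lev.toOrderIso hconn g (m := m) (by rw [hgm]), by simpa using hgm, by simpa using hgu⟩

lemma exists_orderIso_apply_eq_or_adj (h2lev : IsTwoLevel M) (hconn : (compGraph M).Connected)
    (h2arc : LocallyTwoArcTransitive (compGraph M))
    (hdeg : ∀ p q : M, (compGraph M).Adj p q → ∃ z, (compGraph M).Adj q z ∧ z ≠ p)
    {u v : M} (p : (compGraph M).Walk u v) :
    ∃ σ : M ≃o M, σ u = v ∨ (compGraph M).Adj (σ u) v := by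
  induction p with
  | nil => exact ⟨OrderIso.refl M, Or.inl rfl⟩
  | @cons u a v hadj _ ih =>
    obtain ⟨σ, hσ | hσ⟩ := ih
    · exact ⟨σ, Or.inr (hσ ▸ σ.adj_compGraph_apply hadj)⟩
    · obtain ⟨τ, -, hτ⟩ := exists_orderIso_fix_of_adj h2lev hconn h2arc hdeg
        (σ.adj_compGraph_apply hadj).symm hσ
      exact ⟨σ.trans τ, Or.inl hτ⟩

lemma exists_orderIso_apply_eq (h2lev : IsTwoLevel M) (hconn : (compGraph M).Connected)
    (h2arc : LocallyTwoArcTransitive (compGraph M))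
    (hdeg : ∀ p q : M, (compGraph M).Adj p q → ∃ z, (compGraph M).Adj q z ∧ z ≠ p)
    {u v : M} (huv : IsMax u ↔ IsMax v) : ∃ σ : M ≃o M, σ u = v := by
  obtain ⟨σ, hσ | hσ⟩ :=
    exists_orderIso_apply_eq_or_adj h2lev hconn h2arc hdeg (hconn.preconnected u v).some
  · exact ⟨σ, hσ⟩
  · have := h2lev.isMax_iff_not_isMax_of_adj hσ
    rw [σ.isMax_apply] at this
    tauto

lemma orderTwoArcTransitive (h2lev : IsTwoLevel M) (hconn : (compGraph M).Connected)
    (h2arc : LocallyTwoArcTransitive (compGraph M))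
    (hdeg : ∀ p q : M, (compGraph M).Adj p q → ∃ z, (compGraph M).Adj q z ∧ z ≠ p) :
    OrderTwoArcTransitive M := by
  intro v₀ v₁ v₂ w₀ w₁ w₂ hv hw hlevel
  obtain ⟨σ, hσ⟩ := exists_orderIso_apply_eq h2lev hconn h2arc hdeg hlevel
  have hσv : IsTwoArc (compGraph M) w₀ (σ v₁) (σ v₂) :=
    ⟨hσ ▸ σ.adj_compGraph_apply hv.1, σ.adj_compGraph_apply hv.2.1,
      hσ ▸ σ.injective.ne hv.2.2⟩
  obtain ⟨g, hg₀, hg₁, hg₂⟩ := h2arc w₀ _ _ w₁ w₂ hσv hw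
  refine ⟨σ.trans (h2lev.toOrderIso hconn g (m := w₀) (by rw [hg₀])), ?_, ?_, ?_⟩ <;>
    simp [hσ, hg₀, hg₁, hg₂]

end TwoLevel

section Configurations

variable {M : Type*} [PartialOrder M] {x y : ℤ → ↥(MPlus M \ principalSet M)}

lemma IsDirectedLine.antitone (hx : IsDirectedLine (coverDigraph M) x) : Antitone fun i => (x i : DMC M) :=
  antitone_int_of_succ_le fun i => (hx.2 i).le

lemma IsYConfig.exists_anchors (hch : HasChainIntervals M) (h2lev : IsTwoLevel M)
    (hxy : IsYConfig (coverDigraph M) x y) {m : ℤ} (hm : 0 < m) :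
    ∃ a b b' : M, a ∈ (x m).1.1 ∧ b ∈ upperBounds (x (-m)).1.1 ∧ b' ∈ upperBounds (y (-m)).1.1 ∧
      IsTwoArc (compGraph M) b a b' ∧ IsMax b ∧ (x 0).1.1 = lowerBounds {b, b'} := by
  obtain ⟨hx, hy, hxy⟩ := hxy
  have h0 : (x 0 : DMC M) = y 0 := congrArg _ ((hxy 0).2 le_rfl)
  have hne : (x (-1) : DMC M) ≠ y (-1) := fun h => by
    have := (hxy (-1)).1 (Subtype.ext h)
    omega
  have hcx : (x 0 : DMC M) ⋖ x (-1) := by simpa [coverDigraph] using hx.2 (-1)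
  have hcy : (x 0 : DMC M) ⋖ y (-1) := by simpa [coverDigraph, h0] using hy.2 (-1)
  obtain ⟨a, ha⟩ := (x m).1.2.1
  obtain ⟨b, hb⟩ := (x (-m)).1.2.2.1
  obtain ⟨b', hb'⟩ := (y (-m)).1.2.2.1
  have hbx : b ∈ upperBounds (x (-1)).1.1 := fun z hz => hb (hx.antitone (by omega) hz)
  have hby : b' ∈ upperBounds (y (-1)).1.1 := fun z hz => hb' (hy.antitone (by omega) hz)
  have ha₀ : a ∈ (y 0).1.1 := h0 ▸ hx.antitone hm.le ha
  have hab := DMC.lt_of_mem_of_mem_upperBounds (x (-m)).2.2 (hx.antitone (by omega) ha) hb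
  have hab' := DMC.lt_of_mem_of_mem_upperBounds (y (-m)).2.2 (hy.antitone (by omega) ha₀) hb'
  refine ⟨a, b, b', ha, hb, hb', ⟨Or.inr hab, Or.inl hab', ?_⟩, h2lev.isMax_of_lt_s11 hab,
    hch.eq_lowerBounds_pair_of_covBy hcx hcy hne hbx hby⟩
  rintro rfl
  exact hne (hch.eq_of_covBy_of_mem_upperBounds hcx hcy hbx hby)

lemma IsYBarConfig.exists_anchors (hch : HasChainIntervals M)
    (hxy : IsYBarConfig (coverDigraph M) x y) {m : ℤ} (hm : 0 < m) :
    ∃ a a' b : M, a ∈ (x m).1.1 ∧ a' ∈ (y m).1.1 ∧ b ∈ upperBounds (x (-m)).1.1 ∧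
      IsTwoArc (compGraph M) a b a' ∧ ¬ IsMax a ∧
      (x 0).1.1 = lowerBounds (upperBounds {a, a'}) := by
  obtain ⟨hx, hy, hxy⟩ := hxy
  have h0 : (x 0 : DMC M) = y 0 := congrArg _ ((hxy 0).2 le_rfl)
  have hm' : (x (-m) : DMC M) = y (-m) := congrArg _ ((hxy (-m)).2 (by omega))
  have hne : (x 1 : DMC M) ≠ y 1 := fun h => by
    have := (hxy 1).1 (Subtype.ext h)
    omega
  have hcx : (x 1 : DMC M) ⋖ x 0 := hx.2 0
  have hcy : (y 1 : DMC M) ⋖ x 0 := h0 ▸ hy.2 0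
  obtain ⟨a, ha⟩ := (x m).1.2.1
  obtain ⟨a', ha'⟩ := (y m).1.2.1
  obtain ⟨b, hb⟩ := (x (-m)).1.2.2.1
  have ha₁ : a ∈ (x 1).1.1 := hx.antitone (by omega) ha
  have ha₁' : a' ∈ (y 1).1.1 := hy.antitone (by omega) ha'
  have hab := DMC.lt_of_mem_of_mem_upperBounds (x (-m)).2.2 (hx.antitone (by omega) ha) hb
  have ha'm : a' ∈ (x (-m)).1.1 := by
    rw [hm']
    exact hy.antitone (by omega) ha'
  have ha'b := DMC.lt_of_mem_of_mem_upperBounds (x (-m)).2.2 ha'm hb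
  refine ⟨a, a', b, ha, ha', hb, ⟨Or.inl hab, Or.inr ha'b, ?_⟩, not_isMax_of_lt hab,
    hch.eq_lowerBounds_upperBounds_pair_of_covBy hcx hcy hne ha₁ ha₁'⟩
  rintro rfl
  exact hne (hch.eq_of_covBy_of_mem hcx hcy ha₁ ha₁')

lemma HasChainIntervals.coverDigraphAut_apply_eq (hch : HasChainIntervals M) (σ : M ≃o M)
    {x x' : ℤ → ↥(MPlus M \ principalSet M)} (hx : IsDirectedLine (coverDigraph M) x)
    (hx' : IsDirectedLine (coverDigraph M) x') (h₀ : DMC.congr_s11 σ (x 0) = x' 0) {m : ℤ} {a b : M}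
    (ha : a ∈ (x m).1.1) (ha' : σ a ∈ (x' m).1.1) (hb : b ∈ upperBounds (x (-m)).1.1)
    (hb' : σ b ∈ upperBounds (x' (-m)).1.1) {i : ℤ} (hi : |i| ≤ m) :
    (coverDigraphAut σ).1 (x i) = x' i := by
  rw [abs_le] at hi
  refine Subtype.ext ?_
  rcases le_total 0 i with h | h
  · exact hch.congr_eq_of_mem σ (z := fun i => x i) (z' := fun i => x' i) hx.2 hx'.2 h₀ ha ha'
      h hi.2
  · exact hch.congr_eq_of_mem_upperBounds σ (z := fun i => x i) (z' := fun i => x' i) hx.2 hx'.2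
      h₀ hb hb' hi.1 h

lemma IsYConfig.exists_window (hch : HasChainIntervals M) (h2lev : IsTwoLevel M)
    (harc : OrderTwoArcTransitive M) {x' y' : ℤ → ↥(MPlus M \ principalSet M)}
    (hxy : IsYConfig (coverDigraph M) x y) (hxy' : IsYConfig (coverDigraph M) x' y') {m : ℤ}
    (hm : 0 < m) :
    ∃ g : DigraphAut (coverDigraph M), ∀ i, |i| ≤ m → g.1 (x i) = x' i ∧ g.1 (y i) = y' i := by
  obtain ⟨a, b, b', ha, hb, hb', harc₁, hbmax, hx₀⟩ := hxy.exists_anchors hch h2lev hm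
  obtain ⟨a₂, b₂, b₂', ha₂, hb₂, hb₂', harc₂, hb₂max, hx₀'⟩ := hxy'.exists_anchors hch h2lev hm
  obtain ⟨σ, hσb, hσa, hσb'⟩ := harc _ _ _ _ _ _ harc₁ harc₂ (iff_of_true hbmax hb₂max)
  have h₀ : DMC.congr_s11 σ (x 0) = x' 0 := Subtype.ext <| by
    rw [DMC.congr_val, hx₀, ← σ.lowerBounds_image, image_pair, hσb, hσb', hx₀']
  have hy₀ : DMC.congr_s11 σ (y 0) = y' 0 := by
    rw [← (hxy.2.2 0).2 le_rfl, ← (hxy'.2.2 0).2 le_rfl, h₀]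
  have hX : ∀ i, |i| ≤ m → (coverDigraphAut σ).1 (x i) = x' i := fun _ =>
    hch.coverDigraphAut_apply_eq σ hxy.1 hxy'.1 h₀ ha (hσa ▸ ha₂) hb (hσb ▸ hb₂)
  refine ⟨coverDigraphAut σ, fun i hi => ⟨hX i hi, ?_⟩⟩
  rcases le_total i 0 with h | h
  · exact Subtype.ext <| hch.congr_eq_of_mem_upperBounds σ (z := fun i => y i)
      (z' := fun i => y' i) hxy.2.1.2 hxy'.2.1.2 hy₀ hb' (hσb' ▸ hb₂') (abs_le.1 hi).1 h
  · rw [← (hxy.2.2 i).2 h, ← (hxy'.2.2 i).2 h]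
    exact hX i hi

lemma IsYBarConfig.exists_window (hch : HasChainIntervals M) (harc : OrderTwoArcTransitive M)
    {x' y' : ℤ → ↥(MPlus M \ principalSet M)} (hxy : IsYBarConfig (coverDigraph M) x y)
    (hxy' : IsYBarConfig (coverDigraph M) x' y') {m : ℤ} (hm : 0 < m) :
    ∃ g : DigraphAut (coverDigraph M), ∀ i, |i| ≤ m → g.1 (x i) = x' i ∧ g.1 (y i) = y' i := by
  obtain ⟨a, a', b, ha, ha', hb, harc₁, hamax, hx₀⟩ := hxy.exists_anchors hch hm
  obtain ⟨a₂, a₂', b₂, ha₂, ha₂', hb₂, harc₂, ha₂max, hx₀'⟩ := hxy'.exists_anchors hch hm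
  obtain ⟨σ, hσa, hσb, hσa'⟩ := harc _ _ _ _ _ _ harc₁ harc₂ (iff_of_false hamax ha₂max)
  have h₀ : DMC.congr_s11 σ (x 0) = x' 0 := Subtype.ext <| by
    rw [DMC.congr_val, hx₀, ← σ.lowerBounds_image, ← σ.upperBounds_image, image_pair, hσa, hσa',
      hx₀']
  have hy₀ : DMC.congr_s11 σ (y 0) = y' 0 := by
    rw [← (hxy.2.2 0).2 le_rfl, ← (hxy'.2.2 0).2 le_rfl, h₀]
  have hX : ∀ i, |i| ≤ m → (coverDigraphAut σ).1 (x i) = x' i := fun _ =>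
    hch.coverDigraphAut_apply_eq σ hxy.1 hxy'.1 h₀ ha (hσa ▸ ha₂) hb (hσb ▸ hb₂)
  refine ⟨coverDigraphAut σ, fun i hi => ⟨hX i hi, ?_⟩⟩
  rcases le_total 0 i with h | h
  · exact Subtype.ext <| hch.congr_eq_of_mem σ (z := fun i => y i) (z' := fun i => y' i)
      hxy.2.1.2 hxy'.2.1.2 hy₀ ha' (hσa' ▸ ha₂') h (abs_le.1 hi).2
  · rw [← (hxy.2.2 i).2 h, ← (hxy'.2.2 i).2 h]
    exact hX i hi

end Configurations

section Gluing

open Filter Relation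

variable {V : Type*} {E : V → V → Prop}

namespace DigraphAut

def trans (g h : DigraphAut E) : DigraphAut E :=
  ⟨g.1.trans h.1, fun u v => (h.2 _ _).trans (g.2 u v)⟩

def symm (g : DigraphAut E) : DigraphAut E :=
  ⟨g.1.symm, fun u v => by rw [← g.2, g.1.apply_symm_apply, g.1.apply_symm_apply]⟩

lemma eqvGen_apply (g : DigraphAut E) {u v : V} (h : EqvGen E u v) :
    EqvGen E (g.1 u) (g.1 v) := by
  induction h with
  | rel u v h => exact .rel _ _ ((g.2 u v).2 h)
  | refl => exact .refl _
  | symm _ _ _ ih => exact .symm _ _ ih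
  | trans _ _ _ _ _ ih₁ ih₂ => exact .trans _ _ _ ih₁ ih₂

lemma finite_range_apply_iff (hlf : ∀ u, {v | E u v}.Finite ∧ {v | E v u}.Finite)
    (g : ℕ → DigraphAut E) {u v : V} (h : EqvGen E u v) :
    (range fun n => (g n).1 u).Finite ↔ (range fun n => (g n).1 v).Finite := by
  induction h with
  | rel u v h =>
    constructor
    · refine fun hu => (hu.biUnion fun w _ => (hlf w).1).subset ?_
      rintro _ ⟨n, rfl⟩
      exact mem_biUnion ⟨n, rfl⟩ (((g n).2 u v).2 h)
    · refine fun hv => (hv.biUnion fun w _ => (hlf w).2).subset ?_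
      rintro _ ⟨n, rfl⟩
      exact mem_biUnion ⟨n, rfl⟩ (((g n).2 u v).2 h)
  | refl => exact Iff.rfl
  | symm _ _ _ ih => exact ih.symm
  | trans _ _ _ _ _ ih₁ ih₂ => exact ih₁.trans ih₂

lemma exists_eventually_apply_eq_of_fix (hlf : ∀ u, {v | E u v}.Finite ∧ {v | E v u}.Finite)
    (g : ℕ → DigraphAut E) {r : V} (hr : ∀ n, (g n).1 r = r) (U : Ultrafilter ℕ) {v : V}
    (hv : EqvGen E r v) : ∃ w, EqvGen E r w ∧ ∀ᶠ n in U, (g n).1 v = w := by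
  have hfin : (range fun n => (g n).1 v).Finite := by
    refine (finite_range_apply_iff hlf g hv).1 ((finite_singleton r).subset ?_)
    rintro _ ⟨n, rfl⟩
    exact hr n
  obtain ⟨w, ⟨n, rfl⟩, hw⟩ := (Ultrafilter.eventually_exists_mem_iff (P := fun w n => (g n).1 v = w) hfin).1
    (Eventually.of_forall fun n => ⟨_, mem_range_self n, rfl⟩)
  exact ⟨_, hr n ▸ (g n).eqvGen_apply hv, hw⟩

lemma exists_eventually_eq (hlf : ∀ u, {v | E u v}.Finite ∧ {v | E v u}.Finite)
    (g : ℕ → DigraphAut E) {r : V} (hr : ∀ n, (g n).1 r = r) (U : Ultrafilter ℕ) :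
    ∃ h : DigraphAut E, ∀ v, EqvGen E r v → ∀ᶠ n in U, (g n).1 v = h.1 v := by
  have hlim : ∀ k : ℕ → DigraphAut E, (∀ n, (k n).1 r = r) → ∀ v, ∃ w,
      (EqvGen E r v → EqvGen E r w ∧ ∀ᶠ n in U, (k n).1 v = w) ∧ (¬ EqvGen E r v → w = v) := by
    intro k hk v
    by_cases hv : EqvGen E r v
    · obtain ⟨w, hw⟩ := exists_eventually_apply_eq_of_fix hlf k hk U hv
      exact ⟨w, fun _ => hw, fun h => absurd hv h⟩
    · exact ⟨v, fun h => absurd h hv, fun _ => rfl⟩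
  choose F hF using hlim g hr
  choose F' hF' using hlim (fun n => (g n).symm) fun n => (g n).1.symm_apply_eq.2 (hr n).symm
  have hE : ∀ u v, E u v → (EqvGen E r u ↔ EqvGen E r v) := fun u v huv =>
    ⟨fun hu => hu.trans _ _ _ (.rel _ _ huv), fun hv => hv.trans _ _ _ (.symm _ _ (.rel _ _ huv))⟩
  have hF'F : ∀ v, F' (F v) = v := by
    intro v
    by_cases hv : EqvGen E r v
    · obtain ⟨hFv, hgv⟩ := (hF v).1 hv
      obtain ⟨n, hn, hn'⟩ := (hgv.and ((hF' (F v)).1 hFv).2).exists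
      rw [← hn', ← hn]
      exact (g n).1.symm_apply_apply v
    · rw [(hF v).2 hv, (hF' v).2 hv]
  have hFF' : ∀ v, F (F' v) = v := by
    intro v
    by_cases hv : EqvGen E r v
    · obtain ⟨hF'v, hgv⟩ := (hF' v).1 hv
      obtain ⟨n, hn, hn'⟩ := (hgv.and ((hF (F' v)).1 hF'v).2).exists
      rw [← hn', ← hn]
      exact (g n).1.apply_symm_apply v
    · rw [(hF' v).2 hv, (hF v).2 hv]
  have hFE : ∀ u v, E (F u) (F v) ↔ E u v := by
    intro u v
    by_cases hu : EqvGen E r u <;> by_cases hv : EqvGen E r v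
    · obtain ⟨n, hn, hn'⟩ := (((hF u).1 hu).2.and ((hF v).1 hv).2).exists
      rw [← hn, ← hn']
      exact (g n).2 u v
    · rw [(hF v).2 hv]
      exact iff_of_false (fun h => hv ((hE _ _ h).1 ((hF u).1 hu).1)) fun h => hv ((hE _ _ h).1 hu)
    · rw [(hF u).2 hu]
      exact iff_of_false (fun h => hu ((hE _ _ h).2 ((hF v).1 hv).1)) fun h => hu ((hE _ _ h).2 hv)
    · rw [(hF u).2 hu, (hF v).2 hv]
  exact ⟨⟨⟨F, F', hF'F, hFF'⟩, hFE⟩, fun v hv => ((hF v).1 hv).2⟩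

lemma exists_apply_eq_of_eventually (hlf : ∀ u, {v | E u v}.Finite ∧ {v | E v u}.Finite)
    (g : ℕ → DigraphAut E) {r r' : V} (hr : ∀ n, (g n).1 r = r') :
    ∃ h : DigraphAut E, ∀ v w, EqvGen E r v → (∀ᶠ n in atTop, (g n).1 v = w) → h.1 v = w := by
  obtain ⟨h, hh⟩ := exists_eventually_eq hlf (fun n => (g n).trans (g 0).symm) (r := r)
    (fun n => (g 0).1.symm_apply_eq.2 ((hr n).trans (hr 0).symm)) (hyperfilter ℕ)
  refine ⟨h.trans (g 0), fun v w hv hw => ?_⟩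
  obtain ⟨n, hn, hn'⟩ := ((hh v hv).and (Nat.hyperfilter_le_atTop hw)).exists
  change (g 0).1 (h.1 v) = w
  rw [← hn, ← hn']
  exact (g 0).1.apply_symm_apply _

end DigraphAut

lemma IsDirectedLine.eqvGen {x : ℤ → V} (hx : IsDirectedLine E x) (i : ℤ) :
    EqvGen E (x 0) (x i) := by
  induction i using Int.induction_on with
  | zero => exact .refl _
  | succ i ih => exact ih.trans _ _ _ (.rel _ _ (hx.2 i))
  | pred i ih => exact ih.trans _ _ _ (.symm _ _ (.rel _ _ (by simpa using hx.2 (-i - 1))))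

lemma exists_image_eq_of_windows (hlf : ∀ u, {v | E u v}.Finite ∧ {v | E v u}.Finite)
    {x y x' y' : ℤ → V} (hx : IsDirectedLine E x) (hy : IsDirectedLine E y) (h₀ : y 0 = x 0)
    (hwin : ∀ m : ℤ, 0 < m → ∃ g : DigraphAut E, ∀ i, |i| ≤ m → g.1 (x i) = x' i ∧ g.1 (y i) = y' i) :
    ∃ g : DigraphAut E, g.1 '' (range x ∪ range y) = range x' ∪ range y' := by
  choose G hG using fun n : ℕ => hwin (n + 1) (by positivity)
  obtain ⟨h, hh⟩ := DigraphAut.exists_apply_eq_of_eventually hlf G (r := x 0)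
    fun n => (hG n 0 (by positivity)).1
  have hev : ∀ i : ℤ, ∀ᶠ n : ℕ in atTop, |i| ≤ n + 1 := fun i =>
    eventually_atTop.2 ⟨i.natAbs, fun n hn => by rw [Int.abs_eq_natAbs]; omega⟩
  have hxi : ∀ i, h.1 (x i) = x' i := fun i =>
    hh _ _ (hx.eqvGen i) ((hev i).mono fun n hn => (hG n i hn).1)
  have hyi : ∀ i, h.1 (y i) = y' i := fun i =>
    hh _ _ (h₀ ▸ hy.eqvGen i) ((hev i).mono fun n hn => (hG n i hn).2)
  refine ⟨h, ?_⟩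
  rw [image_union, ← range_comp, ← range_comp]
  exact congrArg₂ _ (congrArg range (funext hxi)) (congrArg range (funext hyi))

end Gluing

theorem coverDigraph_stronglyTransitive_of_locallyFinite_general (M : Type*) [PartialOrder M]
    (h2lev : IsTwoLevel M)
    (hconn : (compGraph M).Connected)
    (h2arc : LocallyTwoArcTransitive (compGraph M))
    (hint : ∀ x y : M, x ∈ minSet M → y ∈ maxSet M → x < y →
      Nonempty (↥(Set.Icc (principalCut x) (principalCut y)) ≃o WithBot (WithTop ℤ)))
    (hlf : ∀ u, {v | coverDigraph M u v}.Finite ∧ {v | coverDigraph M v u}.Finite) :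
    StronglyTransitive (coverDigraph M) := by
  have hline : HasLineIntervals M := fun a b hab =>
    hint a b (h2lev.isMin_of_lt_s11 hab) (h2lev.isMax_of_lt_s11 hab) hab
  have hch := hline.hasChainIntervals
  have harc := orderTwoArcTransitive h2lev hconn h2arc fun _ _ => hline.exists_adj_ne
  refine ⟨fun x y x' y' hxy hxy' => ?_, fun x y x' y' hxy hxy' => ?_⟩
  · exact exists_image_eq_of_windows hlf hxy.1 hxy.2.1 ((hxy.2.2 0).2 le_rfl).symm
      fun _ hm => hxy.exists_window hch h2lev harc hxy' hm
  · exact exists_image_eq_of_windows hlf hxy.1 hxy.2.1 ((hxy.2.2 0).2 le_rfl).symm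
      fun _ hm => hxy.exists_window hch harc hxy' hm

/-- Theorem 3.15, last clause. In the setting of the converse direction of
Theorem 3.15, if the covering digraph on `M⁺ \ M` is locally finite then it is strongly
transitive. -/
theorem coverDigraph_stronglyTransitive_of_locallyFinite (M : Type*) [PartialOrder M]
    [Countable M]
    (h2lev : IsTwoLevel M)
    (hconn : (compGraph M).Connected)
    (h2arc : LocallyTwoArcTransitive (compGraph M))
    (hint : ∀ x y : M, x ∈ minSet M → y ∈ maxSet M → x < y →
      Nonempty (↥(Set.Icc (principalCut x) (principalCut y)) ≃o WithBot (WithTop ℤ)))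
    (hlf : ∀ u, {v | coverDigraph M u v}.Finite ∧ {v | coverDigraph M v u}.Finite) :
    StronglyTransitive (coverDigraph M) :=
  coverDigraph_stronglyTransitive_of_locallyFinite_general M h2lev hconn h2arc hint hlf
end
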